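/- Let ψ be an n-qubit pure state and let k ≥ 1 be a real number. If the stabilizer fidelity of ψ is at least 1/k, then η(ψ) := 2ⁿ Σ_{x∈𝔽₂^{2n}} q_ψ(x) p_ψ(x) ≥ 1/k⁶. -/

import Mathlib

open scoped BigOperators
open Finset

noncomputable section

/-- Length-`n` bit strings, i.e. `𝔽₂ⁿ`. -/
abbrev BV (n : ℕ) := Fin n → ZMod 2

/-- Integer-valued inner product: number of coordinates where both strings are 1. -/
def bdot {n : ℕ} (p q : BV n) : ℕ :=
  (Finset.univ.filter (fun i => p i = 1 ∧ q i = 1)).card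

/-- The Weyl operator `W_x` for `x = (p, q) ∈ 𝔽₂^{2n}`:
`W_x |b⟩ = i^{p·q} (−1)^{q·b} |b ⊕ p⟩`. -/
def Weyl {n : ℕ} (x : BV n × BV n) : Matrix (BV n) (BV n) ℂ :=
  Matrix.of fun r c => if r = c + x.1 then Complex.I ^ bdot x.1 x.2 * (-1 : ℂ) ^ bdot x.2 c else 0

/-- `⟨ψ|W_x|ψ⟩`. -/
def weylExp {n : ℕ} (ψ : BV n → ℂ) (x : BV n × BV n) : ℂ :=
  ∑ r : BV n, (starRingEnd ℂ) (ψ r) * ((Weyl x).mulVec ψ r)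

/-- `ψ` is an `n`-qubit pure state, i.e. a unit vector in `ℂ^{2ⁿ}`. -/
def IsState {n : ℕ} (ψ : BV n → ℂ) : Prop :=
  ∑ b : BV n, ‖ψ b‖ ^ 2 = 1

/-- The characteristic distribution `p_ψ(x) = 2^{−n} |⟨ψ|W_x|ψ⟩|²`. -/
def charDist {n : ℕ} (ψ : BV n → ℂ) (x : BV n × BV n) : ℝ :=
  (2 ^ n : ℝ)⁻¹ * ‖weylExp ψ x‖ ^ 2

/-- The Weyl distribution `q_ψ(x) = Σ_y p_ψ(y) p_ψ(x ⊕ y)`. -/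
def weylDist {n : ℕ} (ψ : BV n → ℂ) (x : BV n × BV n) : ℝ :=
  ∑ y : BV n × BV n, charDist ψ y * charDist ψ (x + y)

/-- Fourier coefficient `f̂(s) = 4^{−n} Σ_x f(x) (−1)^{x·s}` for `f : 𝔽₂^{2n} → ℝ`. -/
def booleanFourier {n : ℕ} (f : BV n × BV n → ℝ) (s : BV n × BV n) : ℝ :=
  (4 ^ n : ℝ)⁻¹ * ∑ x : BV n × BV n, f x * (-1 : ℝ) ^ (bdot x.1 s.1 + bdot x.2 s.2)

/-- The Hadamard gate on qubit `j`. -/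
def Hgate {n : ℕ} (j : Fin n) : Matrix (BV n) (BV n) ℂ :=
  Matrix.of fun r c =>
    if ∀ i, i ≠ j → r i = c i then
      (((Real.sqrt 2 : ℝ) : ℂ))⁻¹ * (-1 : ℂ) ^ ((r j).val * (c j).val)
    else 0

/-- The phase gate `S = diag(1, i)` on qubit `j`. -/
def Sgate {n : ℕ} (j : Fin n) : Matrix (BV n) (BV n) ℂ :=
  Matrix.of fun r c => if r = c then Complex.I ^ (r j).val else 0

/-- The CNOT gate with control qubit `j` and target qubit `k`. -/
def CNOTgate {n : ℕ} (j k : Fin n) : Matrix (BV n) (BV n) ℂ :=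
  Matrix.of fun r c => if r = Function.update c k (c k + c j) then 1 else 0

/-- The generators of the `n`-qubit Clifford group. -/
def cliffordGens (n : ℕ) : Set (Matrix (BV n) (BV n) ℂ) :=
  {M | (∃ j, M = Hgate j) ∨ (∃ j, M = Sgate j) ∨ (∃ j k, j ≠ k ∧ M = CNOTgate j k)}

/-- The `n`-qubit Clifford group `𝒞ₙ`: all finite products of the generators.
(Each generator has finite order, so this coincides with the generated group.) -/
def CliffordGroup (n : ℕ) : Submonoid (Matrix (BV n) (BV n) ℂ) :=
  Submonoid.closure (cliffordGens n)

/-- The all-zeros basis state `|0ⁿ⟩`. -/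
def e0 {n : ℕ} : BV n → ℂ := fun b => if b = 0 then 1 else 0

/-- The set of `n`-qubit stabilizer states `𝒮ₙ = {C|0ⁿ⟩ : C ∈ 𝒞ₙ}`. -/
def stabStates (n : ℕ) : Set (BV n → ℂ) :=
  {φ | ∃ C ∈ CliffordGroup n, φ = C.mulVec e0}

/-- The inner product `⟨φ|ψ⟩`. -/
def innerC {n : ℕ} (φ ψ : BV n → ℂ) : ℂ := ∑ b : BV n, (starRingEnd ℂ) (φ b) * ψ b

/-- The stabilizer fidelity `F_𝒮(ψ) = max_{φ ∈ 𝒮ₙ} |⟨φ|ψ⟩|²`. -/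
def stabFidelity {n : ℕ} (ψ : BV n → ℂ) : ℝ :=
  sSup {r | ∃ φ ∈ stabStates n, r = ‖innerC φ ψ‖ ^ 2}

/-- The stabilizer extent `ξ(ψ)`: the minimum of `(Σᵢ |cᵢ|)²` over all finite
decompositions `ψ = Σᵢ cᵢ φᵢ` with stabilizer states `φᵢ`. -/
def stabExtent {n : ℕ} (ψ : BV n → ℂ) : ℝ :=
  sInf {r | ∃ (m : ℕ) (c : Fin m → ℂ) (φ : Fin m → (BV n → ℂ)),
    (∀ i, φ i ∈ stabStates n) ∧ ψ = ∑ i, c i • φ i ∧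
    r = (∑ i, ‖c i‖) ^ 2}

/-- The T-gate `T = diag(1, e^{iπ/4})` on qubit `j`. -/
def Tgate {n : ℕ} (j : Fin n) : Matrix (BV n) (BV n) ℂ :=
  Matrix.of fun r c => if r = c then Complex.exp (Complex.I * Real.pi / 4) ^ (r j).val else 0

/-- The `m`-fold tensor power `|T⟩^{⊗m}` of `|T⟩ = (|0⟩ + e^{iπ/4}|1⟩)/√2`. -/
def TstateM (m : ℕ) : BV m → ℂ :=
  fun b => ∏ i : Fin m, ((((Real.sqrt 2 : ℝ) : ℂ))⁻¹ * Complex.exp (Complex.I * Real.pi / 4) ^ (b i).val)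

end

noncomputable section EtaAux

/-!
Write `P_x = Z^q X^p` for the Weyl operator `W_x` stripped of its phase, so that
`p_ψ(x) = 2⁻ⁿ |⟨ψ|P_x|ψ⟩|²`. The characteristic distribution is self-dual under the symplectic
Fourier transform of `𝔽₂^{2n}`; hence the convolution `q_ψ` pairs with `p_ψ` to a multiple of
`Σ_x p_ψ(x)³`, and `η(ψ) = 2⁻ⁿ Σ_x |⟨ψ|P_x|ψ⟩|⁶`.

The Clifford generators conjugate Pauli operators to Pauli operators up to a phase, so for a
stabilizer state `φ` every `|⟨φ|P_x|φ⟩|` is `0` or `1`, and by Parseval exactly `2ⁿ` of them are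
`1`. Since `Σ_x ⟨φ|P_x|φ⟩* ⟨ψ|P_x|ψ⟩ = 2ⁿ |⟨φ|ψ⟩|²`, the power-mean inequality on that support
gives `|⟨φ|ψ⟩|¹² ≤ η(ψ)`, and it remains to take the supremum over `φ`.
-/

open Matrix ComplexConjugate

section BitStrings

variable {n : ℕ}

lemma zmod2_eq_zero_or_eq_one (a : ZMod 2) : a = 0 ∨ a = 1 := by
  revert a; decide

lemma add_eq_iff_eq_add_of_zmodModule {G : Type*} [AddCommGroup G] [Module (ZMod 2) G]
    {a b c : G} : a + b = c ↔ a = c + b := by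
  rw [← ZModModule.sub_eq_add, sub_eq_iff_eq_add]

lemma eq_add_iff_eq_add_of_zmodModule {G : Type*} [AddCommGroup G] [Module (ZMod 2) G]
    {a b c : G} : a = b + c ↔ b = a + c := by
  constructor <;> rintro rfl <;> simp [add_assoc, ZModModule.add_self]

lemma neg_one_pow_val_add {R : Type*} [CommRing R] (a b : ZMod 2) :
    (-1 : R) ^ (a + b).val = (-1) ^ a.val * (-1) ^ b.val := by
  rw [ZMod.val_add, ← neg_one_pow_eq_pow_mod_two, pow_add]

lemma neg_one_pow_val_mul_val {R : Type*} [CommRing R] (a b : ZMod 2) :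
    (-1 : R) ^ (a.val * b.val) = (-1) ^ (a * b).val := by
  rw [ZMod.val_mul, ← neg_one_pow_eq_pow_mod_two]

lemma natCast_bdot (a b : BV n) : (bdot a b : ZMod 2) = a ⬝ᵥ b := by
  rw [bdot, Finset.card_filter, Nat.cast_sum, dotProduct]
  refine Finset.sum_congr rfl fun i _ => ?_
  generalize a i = u; generalize b i = v
  revert u v; decide

lemma neg_one_pow_bdot {R : Type*} [CommRing R] (a b : BV n) :
    (-1 : R) ^ bdot a b = (-1) ^ (a ⬝ᵥ b).val := by
  rw [neg_one_pow_eq_pow_mod_two, ← ZMod.val_natCast, natCast_bdot]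

lemma sum_neg_one_pow_dotProduct {R : Type*} [CommRing R] [IsDomain R] [NeZero (2 : R)]
    (c : BV n) : ∑ q : BV n, (-1 : R) ^ (q ⬝ᵥ c).val = if c = 0 then 2 ^ n else 0 := by
  split_ifs with hc
  · simp [hc]
  obtain ⟨j, hj⟩ : ∃ j, c j ≠ 0 := by
    by_contra! h
    exact hc (funext h)
  have hcj : c j = 1 := (zmod2_eq_zero_or_eq_one _).resolve_left hj
  have hflip (q : BV n) :
      (-1 : R) ^ ((q + Pi.single j 1) ⬝ᵥ c).val = -(-1) ^ (q ⬝ᵥ c).val := by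
    rw [add_dotProduct, neg_one_pow_val_add, single_dotProduct, hcj]
    simp [ZMod.val_one]
  have h : ∑ q : BV n, (-1 : R) ^ ((q + Pi.single j 1) ⬝ᵥ c).val
      = ∑ q : BV n, (-1 : R) ^ (q ⬝ᵥ c).val :=
    Equiv.sum_comp (Equiv.addRight (Pi.single j 1)) fun q => (-1 : R) ^ (q ⬝ᵥ c).val
  simp only [hflip, Finset.sum_neg_distrib] at h
  have h2 : (2 : R) * ∑ q : BV n, (-1 : R) ^ (q ⬝ᵥ c).val = 0 := by
    linear_combination -h
  exact (mul_eq_zero.mp h2).resolve_left two_ne_zero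

lemma sum_mul_neg_one_pow_dotProduct_add_add {R : Type*} [CommRing R] [IsDomain R]
    [NeZero (2 : R)] (F : BV n → BV n → R) (a : BV n) :
    ∑ q : BV n, ∑ c, ∑ r, F c r * (-1) ^ (q ⬝ᵥ (c + r + a)).val = 2 ^ n * ∑ r, F (r + a) r := by
  have hq (c r : BV n) : ∑ q : BV n, F c r * (-1 : R) ^ (q ⬝ᵥ (c + r + a)).val
      = if c = r + a then 2 ^ n * F c r else 0 := by
    rw [← Finset.mul_sum, sum_neg_one_pow_dotProduct]
    simp only [add_assoc, add_eq_zero_iff_eq_neg, ZModModule.neg_eq_self]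
    split_ifs <;> ring
  calc ∑ q : BV n, ∑ c, ∑ r, F c r * (-1) ^ (q ⬝ᵥ (c + r + a)).val
      = ∑ c, ∑ r, ∑ q : BV n, F c r * (-1) ^ (q ⬝ᵥ (c + r + a)).val := by
        rw [Finset.sum_comm]
        exact Finset.sum_congr rfl fun c _ => Finset.sum_comm
    _ = 2 ^ n * ∑ r, F (r + a) r := by
        simp_rw [hq]
        rw [Finset.sum_comm, Finset.mul_sum]
        simp

lemma dotProduct_sub_mul_eq_of_eq_off {ι R : Type*} [Fintype ι] [DecidableEq ι] [CommRing R]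
    {a b a' b' : ι → R} (j : ι) (ha : ∀ i, i ≠ j → a' i = a i) (hb : ∀ i, i ≠ j → b' i = b i) :
    a' ⬝ᵥ b' - a' j * b' j = a ⬝ᵥ b - a j * b j := by
  rw [dotProduct, dotProduct, ← Finset.add_sum_erase _ _ (Finset.mem_univ j),
    ← Finset.add_sum_erase _ _ (Finset.mem_univ j), add_sub_cancel_left, add_sub_cancel_left]
  exact Finset.sum_congr rfl fun i hi => by
    rw [ha i (Finset.ne_of_mem_erase hi), hb i (Finset.ne_of_mem_erase hi)]

lemma dotProduct_add_single {ι R : Type*} [Fintype ι] [DecidableEq ι] [CommSemiring R]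
    (q r : ι → R) (j k : ι) : q ⬝ᵥ (r + Pi.single k (r j)) = (q + Pi.single j (q k)) ⬝ᵥ r := by
  simp [dotProduct_add, add_dotProduct]

lemma update_add_eq_add_single {ι M : Type*} [DecidableEq ι] [AddZeroClass M] (c : ι → M)
    (j k : ι) :
    Function.update c k (c k + c j) = c + Pi.single k (c j) := by
  funext i
  by_cases hi : i = k
  · subst hi; simp
  · simp [hi]

lemma add_single_involutive {j k : Fin n} (hjk : j ≠ k) :
    Function.Involutive fun v : BV n => v + Pi.single k (v j) := fun v => by
  simp [Pi.single_eq_of_ne hjk, add_assoc, ZModModule.add_self]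

end BitStrings

section Pauli

variable {n : ℕ}

def pauli (x : BV n × BV n) : Matrix (BV n) (BV n) ℂ :=
  of fun r c => if r = c + x.1 then (-1) ^ (x.2 ⬝ᵥ r).val else 0

lemma pauli_mul_apply (x : BV n × BV n) (M : Matrix (BV n) (BV n) ℂ) (r c : BV n) :
    (pauli x * M) r c = (-1) ^ (x.2 ⬝ᵥ r).val * M (r + x.1) c := by
  rw [mul_apply, Finset.sum_eq_single (r + x.1)]
  · simp [pauli, add_assoc, ZModModule.add_self]
  · intro m _ hm
    simp [pauli, eq_add_iff_eq_add_of_zmodModule, hm]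
  · simp

lemma mul_pauli_apply (M : Matrix (BV n) (BV n) ℂ) (x : BV n × BV n) (r c : BV n) :
    (M * pauli x) r c = M r (c + x.1) * (-1) ^ (x.2 ⬝ᵥ (c + x.1)).val := by
  rw [mul_apply, Finset.sum_eq_single (c + x.1)]
  · simp [pauli]
  · intro m _ hm
    simp [pauli, hm]
  · simp

lemma pauli_mulVec (x : BV n × BV n) (v : BV n → ℂ) (r : BV n) :
    (pauli x *ᵥ v) r = (-1) ^ (x.2 ⬝ᵥ r).val * v (r + x.1) := by
  rw [mulVec, dotProduct, Finset.sum_eq_single (r + x.1)]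
  · simp [pauli, add_assoc, ZModModule.add_self]
  · intro m _ hm
    simp [pauli, eq_add_iff_eq_add_of_zmodModule, hm]
  · simp

lemma pauli_zero : pauli (0 : BV n × BV n) = 1 := by
  ext r c
  simp [pauli, one_apply]

lemma pauli_mul_pauli (x y : BV n × BV n) :
    pauli x * pauli y = (-1 : ℂ) ^ (y.2 ⬝ᵥ x.1).val • pauli (x + y) := by
  ext r c
  have hcond : r + x.1 = c + y.1 ↔ r = c + (x.1 + y.1) := by
    rw [add_eq_iff_eq_add_of_zmodModule, add_comm x.1, add_assoc]
  rw [pauli_mul_apply, Matrix.smul_apply]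
  simp only [pauli, of_apply, Prod.fst_add, Prod.snd_add, hcond]
  split_ifs
  · rw [dotProduct_add, add_dotProduct, neg_one_pow_val_add, neg_one_pow_val_add]
    ring
  · simp

lemma Weyl_eq_smul_pauli (x : BV n × BV n) :
    Weyl x = (Complex.I ^ bdot x.1 x.2 * (-1) ^ bdot x.2 x.1) • pauli x := by
  ext r c
  by_cases h : r = c + x.1
  · subst h
    simp only [Weyl, pauli, of_apply, Matrix.smul_apply, if_true, smul_eq_mul]
    rw [neg_one_pow_bdot, neg_one_pow_bdot, dotProduct_add, neg_one_pow_val_add]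
    ring_nf
    simp [pow_mul']
  · simp [Weyl, pauli, h]

def pauliOverlap (φ ψ : BV n → ℂ) (x : BV n × BV n) : ℂ := star φ ⬝ᵥ (pauli x *ᵥ ψ)

lemma pauliOverlap_eq_sum (φ ψ : BV n → ℂ) (x : BV n × BV n) :
    pauliOverlap φ ψ x = ∑ r, conj (φ r) * ((-1) ^ (x.2 ⬝ᵥ r).val * ψ (r + x.1)) := by
  simp only [pauliOverlap, dotProduct, pauli_mulVec]
  rfl

lemma norm_weylExp (ψ : BV n → ℂ) (x : BV n × BV n) :
    ‖weylExp ψ x‖ = ‖pauliOverlap ψ ψ x‖ := by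
  have : weylExp ψ x = star ψ ⬝ᵥ (Weyl x *ᵥ ψ) := rfl
  rw [this, Weyl_eq_smul_pauli, smul_mulVec, dotProduct_smul, smul_eq_mul, norm_mul]
  simp [pauliOverlap]

end Pauli

section SymplecticFourier

variable {n : ℕ}

def symp (x y : BV n × BV n) : ZMod 2 := x.1 ⬝ᵥ y.2 + x.2 ⬝ᵥ y.1

lemma symp_comm (x y : BV n × BV n) : symp x y = symp y x := by
  simp only [symp, dotProduct_comm x.1, dotProduct_comm x.2, add_comm]

lemma symp_add_left (x y z : BV n × BV n) : symp (x + y) z = symp x z + symp y z := by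
  simp only [symp, Prod.fst_add, Prod.snd_add, add_dotProduct]
  ring

/-- With `φ = ψ` this is the self-duality of the characteristic distribution, with `w = 0` it is
Parseval's identity. -/
theorem sum_conj_pauliOverlap_mul_pauliOverlap_mul_sign (φ ψ : BV n → ℂ) (w : BV n × BV n) :
    ∑ y, conj (pauliOverlap φ φ y) * pauliOverlap ψ ψ y * (-1) ^ (symp y w).val
      = 2 ^ n * (pauliOverlap ψ φ w * conj (pauliOverlap ψ φ w)) := by
  set G : BV n → BV n → BV n → ℂ := fun y₁ c r =>
    φ c * conj (φ (c + y₁)) * (conj (ψ r) * ψ (r + y₁)) * (-1) ^ (y₁ ⬝ᵥ w.2).val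
  have hexpand (y₁ y₂ : BV n) :
      conj (pauliOverlap φ φ (y₁, y₂)) * pauliOverlap ψ ψ (y₁, y₂) * (-1) ^ (symp (y₁, y₂) w).val
        = ∑ c, ∑ r, G y₁ c r * (-1) ^ (y₂ ⬝ᵥ (c + r + w.1)).val := by
    simp only [pauliOverlap_eq_sum, map_sum, map_mul, map_pow, map_neg, map_one,
      Complex.conj_conj, symp, dotProduct_add, neg_one_pow_val_add]
    rw [Finset.sum_mul_sum, Finset.sum_mul]
    refine Finset.sum_congr rfl fun c _ => ?_
    rw [Finset.sum_mul]
    refine Finset.sum_congr rfl fun r _ => ?_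
    rw [dotProduct_comm y₂ w.1]
    ring
  have hshift (r s : BV n) : G (r + s) (r + w.1) r
      = conj (ψ r) * ((-1) ^ (w.2 ⬝ᵥ r).val * φ (r + w.1))
        * conj (conj (ψ s) * ((-1) ^ (w.2 ⬝ᵥ s).val * φ (s + w.1))) := by
    simp only [G, map_mul, map_pow, map_neg, map_one, Complex.conj_conj, dotProduct_add,
      neg_one_pow_val_add, dotProduct_comm _ w.2, add_add_add_comm r w.1, ← add_assoc r r,
      ZModModule.add_self, zero_add, add_comm w.1]
    ring
  calc ∑ y, conj (pauliOverlap φ φ y) * pauliOverlap ψ ψ y * (-1) ^ (symp y w).val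
      = ∑ y₁, ∑ y₂ : BV n, ∑ c, ∑ r, G y₁ c r * (-1) ^ (y₂ ⬝ᵥ (c + r + w.1)).val := by
        rw [Fintype.sum_prod_type]
        simp only [hexpand]
    _ = ∑ y₁, 2 ^ n * ∑ r, G y₁ (r + w.1) r :=
        Finset.sum_congr rfl fun y₁ _ => sum_mul_neg_one_pow_dotProduct_add_add (G y₁) w.1
    _ = 2 ^ n * ∑ r, ∑ s, G (r + s) (r + w.1) r := by
        rw [← Finset.mul_sum, Finset.sum_comm]
        congr 1
        exact Finset.sum_congr rfl fun r _ =>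
          (Equiv.sum_comp (Equiv.addLeft r) fun y₁ => G y₁ (r + w.1) r).symm
    _ = 2 ^ n * (pauliOverlap ψ φ w * conj (pauliOverlap ψ φ w)) := by
        simp only [hshift, ← Finset.sum_mul_sum, pauliOverlap_eq_sum, map_sum]

lemma sum_conj_pauliOverlap_mul_pauliOverlap (φ ψ : BV n → ℂ) :
    ∑ y, conj (pauliOverlap φ φ y) * pauliOverlap ψ ψ y = 2 ^ n * (‖innerC φ ψ‖ ^ 2 : ℝ) := by
  have h := sum_conj_pauliOverlap_mul_pauliOverlap_mul_sign φ ψ 0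
  have hinner : pauliOverlap ψ φ 0 = conj (innerC φ ψ) := by
    simp [pauliOverlap_eq_sum, innerC, mul_comm]
  simpa [symp, hinner, Complex.conj_mul'] using h

lemma sum_charDist_mul_sign (ψ : BV n → ℂ) (w : BV n × BV n) :
    ∑ y, charDist ψ y * (-1) ^ (symp y w).val = 2 ^ n * charDist ψ w := by
  have h := sum_conj_pauliOverlap_mul_pauliOverlap_mul_sign ψ ψ w
  simp only [Complex.conj_mul', Complex.mul_conj'] at h
  have h' : ∑ y, ‖pauliOverlap ψ ψ y‖ ^ 2 * (-1 : ℝ) ^ (symp y w).val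
      = 2 ^ n * ‖pauliOverlap ψ ψ w‖ ^ 2 := by
    exact_mod_cast h
  simp only [charDist, norm_weylExp, mul_assoc, ← Finset.mul_sum, h']
  ring

theorem sum_sum_mul_mul_add_of_forall_sum_mul_sign (f : BV n × BV n → ℝ) {c : ℝ} (hc : c ≠ 0)
    (hf : ∀ w, ∑ y, f y * (-1) ^ (symp y w).val = c * f w) :
    ∑ x, (∑ y, f y * f (x + y)) * f x = c * ∑ z, f z ^ 3 := by
  have hsplit (x y z : BV n × BV n) :
      (-1 : ℝ) ^ (symp x z).val = (-1) ^ (symp (x + y) z).val * (-1) ^ (symp y z).val := by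
    rw [← neg_one_pow_val_add, ← symp_add_left, add_assoc, ZModModule.add_self, add_zero]
  have hconv (z : BV n × BV n) :
      ∑ x, ∑ y, f y * f (x + y) * (-1) ^ (symp x z).val = (c * f z) ^ 2 := by
    have hshift (y : BV n × BV n) :
        ∑ x, f (x + y) * (-1) ^ (symp (x + y) z).val = c * f z :=
      (Equiv.sum_comp (Equiv.addRight y) fun u => f u * (-1) ^ (symp u z).val).trans (hf z)
    rw [Finset.sum_comm]
    calc ∑ y, ∑ x, f y * f (x + y) * (-1) ^ (symp x z).val
        = ∑ y, f y * (-1) ^ (symp y z).val * ∑ x, f (x + y) * (-1) ^ (symp (x + y) z).val := by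
          refine Finset.sum_congr rfl fun y _ => ?_
          rw [Finset.mul_sum]
          refine Finset.sum_congr rfl fun x _ => ?_
          rw [hsplit x y z]
          ring
      _ = (c * f z) ^ 2 := by
          simp only [hshift, ← Finset.sum_mul, hf]
          ring
  have hinv (x : BV n × BV n) : f x = c⁻¹ * ∑ z, f z * (-1) ^ (symp x z).val := by
    simp only [symp_comm x, hf, inv_mul_cancel_left₀ hc]
  calc ∑ x, (∑ y, f y * f (x + y)) * f x
      = ∑ x, ∑ z, ∑ y, c⁻¹ * f z * (f y * f (x + y) * (-1) ^ (symp x z).val) := by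
        refine Finset.sum_congr rfl fun x _ => ?_
        rw [hinv x, Finset.mul_sum, Finset.sum_mul_sum, Finset.sum_comm]
        exact Finset.sum_congr rfl fun z _ => Finset.sum_congr rfl fun y _ => by ring
    _ = ∑ z, c⁻¹ * f z * ∑ x, ∑ y, f y * f (x + y) * (-1) ^ (symp x z).val := by
        rw [Finset.sum_comm]
        simp only [Finset.mul_sum]
    _ = c * ∑ z, f z ^ 3 := by
        simp only [hconv, Finset.mul_sum]
        refine Finset.sum_congr rfl fun z _ => ?_
        field_simp

lemma eta_eq (ψ : BV n → ℂ) :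
    (2 ^ n : ℝ) * ∑ x, weylDist ψ x * charDist ψ x
      = ((2 : ℝ) ^ n)⁻¹ * ∑ x, ‖pauliOverlap ψ ψ x‖ ^ 6 := by
  simp only [weylDist]
  rw [sum_sum_mul_mul_add_of_forall_sum_mul_sign (charDist ψ) (by positivity)
    (sum_charDist_mul_sign ψ)]
  simp only [charDist, norm_weylExp, Finset.mul_sum]
  refine Finset.sum_congr rfl fun x _ => ?_
  field_simp

end SymplecticFourier

section FidelityBound

variable {n : ℕ}

lemma norm_sum_mul_pow_le {ι : Type*} [Fintype ι] (a b : ι → ℂ) (ha : ∀ i, ‖a i‖ ≤ 1) (m : ℕ) :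
    ‖∑ i, a i * b i‖ ^ (m + 1) ≤ (#{i | a i ≠ 0} : ℝ) ^ m * ∑ i, ‖b i‖ ^ (m + 1) := by
  have hsupp : ‖∑ i, a i * b i‖ ≤ ∑ i ∈ {i | a i ≠ 0}, ‖b i‖ := calc
    ‖∑ i, a i * b i‖ = ‖∑ i ∈ {i | a i ≠ 0}, a i * b i‖ := by
      rw [Finset.sum_filter_of_ne fun i _ h => left_ne_zero_of_mul h]
    _ ≤ ∑ i ∈ {i | a i ≠ 0}, ‖a i * b i‖ := norm_sum_le _ _
    _ = ∑ i ∈ {i | a i ≠ 0}, ‖a i‖ * ‖b i‖ := by simp only [norm_mul]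
    _ ≤ ∑ i ∈ {i | a i ≠ 0}, ‖b i‖ := by
      gcongr with i
      exact mul_le_of_le_one_left (norm_nonneg _) (ha i)
  calc ‖∑ i, a i * b i‖ ^ (m + 1)
      ≤ (∑ i ∈ {i | a i ≠ 0}, ‖b i‖) ^ (m + 1) := by gcongr
    _ ≤ (#{i | a i ≠ 0} : ℝ) ^ m * ∑ i ∈ {i | a i ≠ 0}, ‖b i‖ ^ (m + 1) :=
      pow_sum_le_card_mul_sum_pow (fun i _ => norm_nonneg _) m
    _ ≤ (#{i | a i ≠ 0} : ℝ) ^ m * ∑ i, ‖b i‖ ^ (m + 1) := by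
      gcongr
      exact Finset.subset_univ _

lemma card_ne_zero_eq_sum_norm_sq {ι : Type*} [Fintype ι] (a : ι → ℂ)
    (ha : ∀ i, a i = 0 ∨ ‖a i‖ = 1) : (#{i | a i ≠ 0} : ℝ) = ∑ i, ‖a i‖ ^ 2 := by
  rw [Finset.natCast_card_filter]
  refine Finset.sum_congr rfl fun i _ => ?_
  rcases ha i with h | h
  · simp [h]
  · simp [h, ← norm_ne_zero_iff]

theorem fidelity_pow_six_le (φ ψ : BV n → ℂ) (hφ : innerC φ φ = 1)
    (hφP : ∀ x, pauliOverlap φ φ x = 0 ∨ ‖pauliOverlap φ φ x‖ = 1) :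
    (‖innerC φ ψ‖ ^ 2) ^ 6 ≤ ((2 : ℝ) ^ n)⁻¹ * ∑ x, ‖pauliOverlap ψ ψ x‖ ^ 6 := by
  have hcard : (#{x | conj (pauliOverlap φ φ x) ≠ 0} : ℝ) = 2 ^ n := by
    have h := sum_conj_pauliOverlap_mul_pauliOverlap φ φ
    simp only [Complex.conj_mul', hφ, norm_one, one_pow, Complex.ofReal_one, mul_one] at h
    simp only [map_ne_zero]
    rw [card_ne_zero_eq_sum_norm_sq _ hφP]
    exact_mod_cast h
  have hnorm : ‖∑ x, conj (pauliOverlap φ φ x) * pauliOverlap ψ ψ x‖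
      = 2 ^ n * ‖innerC φ ψ‖ ^ 2 := by
    rw [sum_conj_pauliOverlap_mul_pauliOverlap]
    norm_cast
    simp
  have h := norm_sum_mul_pow_le _ (pauliOverlap ψ ψ)
    (fun x => (Complex.norm_conj _).trans_le ((hφP x).elim (fun h => by simp [h]) le_of_eq)) 5
  rw [hnorm, hcard, mul_pow, pow_succ, mul_assoc] at h
  rw [le_inv_mul_iff₀ (by positivity)]
  exact le_of_mul_le_mul_left h (by positivity)

end FidelityBound

section Clifford

variable {n : ℕ}

lemma Hgate_eq_smul_pauli_add_pauli (j : Fin n) : Hgate j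
    = ((Real.sqrt 2 : ℝ) : ℂ)⁻¹ • (pauli (Pi.single j 1, 0) + pauli (0, Pi.single j 1)) := by
  ext r c
  simp only [Hgate, pauli, of_apply, Matrix.smul_apply, Matrix.add_apply, add_zero,
    zero_dotProduct, single_dotProduct, one_mul, smul_eq_mul]
  by_cases hoff : ∀ i, i ≠ j → r i = c i
  · obtain ⟨d, rfl⟩ : ∃ d, r = c + Pi.single j d := ⟨r j + c j, funext fun i => by
      by_cases hi : i = j
      · subst hi; simp; grind
      · simp [hi, hoff i hi]⟩
    have hne : c + Pi.single j 1 ≠ c := fun h => by simpa using congrFun h j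
    rw [if_pos hoff]
    obtain rfl | rfl := zmod2_eq_zero_or_eq_one d
    · simp [hne.symm]
      obtain h | h := zmod2_eq_zero_or_eq_one (c j) <;> simp [h, ZMod.val_one]
    · simp [hne]
      obtain h | h := zmod2_eq_zero_or_eq_one (c j) <;>
        simp [h, ZMod.val_one, CharTwo.add_self_eq_zero]
  · have h1 : r ≠ c + Pi.single j 1 := fun h => hoff fun i hi => by simp [h, hi]
    have h2 : r ≠ c := fun h => hoff fun i _ => by rw [h]
    simp [hoff, h1, h2]

lemma star_Hgate (j : Fin n) : star (Hgate j) = Hgate j := by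
  ext r c
  simp only [star_apply, Hgate, of_apply, eq_comm (a := c _), mul_comm (c j).val]
  split_ifs <;> simp

lemma Hgate_mem_unitaryGroup (j : Fin n) : Hgate j ∈ unitaryGroup (BV n) ℂ := by
  rw [mem_unitaryGroup_iff', star_Hgate, Hgate_eq_smul_pauli_add_pauli, smul_mul_smul_comm, add_mul, mul_add, mul_add,
    pauli_mul_pauli, pauli_mul_pauli, pauli_mul_pauli, pauli_mul_pauli]
  have hγ : ((Real.sqrt 2 : ℝ) : ℂ)⁻¹ * ((Real.sqrt 2 : ℝ) : ℂ)⁻¹ = 1 / 2 := by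
    rw [← mul_inv, ← Complex.ofReal_mul, Real.mul_self_sqrt zero_le_two]
    norm_num
  simp only [Prod.mk_add_mk, add_zero, zero_add, ZModModule.add_self, pauli_zero, hγ,
    dotProduct_zero, zero_dotProduct, single_dotProduct, Pi.single_eq_same, mul_one, ZMod.val_one,
    ZMod.val_zero, pow_zero, pow_one, one_smul, neg_one_smul]
  module

lemma pauli_mul_Hgate (j : Fin n) (x : BV n × BV n) :
    pauli x * Hgate j = (-1 : ℂ) ^ (x.1 j * x.2 j).val • (Hgate j *
      pauli (x.1 + Pi.single j (x.1 j + x.2 j), x.2 + Pi.single j (x.1 j + x.2 j))) := by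
  set y : BV n × BV n := (x.1 + Pi.single j (x.1 j + x.2 j), x.2 + Pi.single j (x.1 j + x.2 j))
  have hy (i : Fin n) (hi : i ≠ j) : y.1 i = x.1 i ∧ y.2 i = x.2 i := by
    simp [y, Pi.single_eq_of_ne hi]
  ext r c
  rw [pauli_mul_apply, Matrix.smul_apply, mul_pauli_apply]
  have hoff : (∀ i, i ≠ j → (r + x.1) i = c i) ↔ (∀ i, i ≠ j → r i = (c + y.1) i) :=
    forall₂_congr fun i hi => by simp [(hy i hi).1, CharTwo.add_eq_iff_eq_add]
  simp only [Hgate, of_apply, hoff]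
  split_ifs with h
  · have hdot := dotProduct_sub_mul_eq_of_eq_off j (a := x.2) (b := r) (a' := y.2) (b' := c + y.1)
      (fun i hi => (hy i hi).2) (fun i hi => (h i hi).symm)
    rw [neg_one_pow_val_mul_val, neg_one_pow_val_mul_val, eq_add_of_sub_eq hdot]
    conv_lhs => rw [mul_left_comm, ← neg_one_pow_val_add]
    conv_rhs => rw [smul_eq_mul, mul_assoc, ← neg_one_pow_val_add, mul_left_comm,
      ← neg_one_pow_val_add]
    congr 3
    simp only [y, Pi.add_apply, Pi.single_eq_same]
    grind
  · simp

lemma Sgate_mem_unitaryGroup (j : Fin n) : Sgate j ∈ unitaryGroup (BV n) ℂ := by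
  rw [mem_unitaryGroup_iff']
  ext r c
  rw [mul_apply, Finset.sum_eq_single r]
  · simp only [star_apply, Sgate, of_apply, if_true, one_apply]
    split_ifs <;> simp [← mul_pow]
  · intro m _ hm
    simp [Sgate, hm]
  · simp

lemma pauli_mul_Sgate (j : Fin n) (x : BV n × BV n) :
    pauli x * Sgate j
      = Complex.I ^ (x.1 j).val • (Sgate j * pauli (x.1, x.2 + Pi.single j (x.1 j))) := by
  ext r c
  rw [pauli_mul_apply, Matrix.smul_apply, mul_pauli_apply]
  simp only [Sgate, of_apply, add_eq_iff_eq_add_of_zmodModule, smul_eq_mul]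
  split_ifs with h
  · subst h
    have hI (a b : ZMod 2) : Complex.I ^ a.val
        = Complex.I ^ b.val * (Complex.I ^ (a + b).val * (-1) ^ (b * (a + b)).val) := by
      obtain rfl | rfl := zmod2_eq_zero_or_eq_one a <;>
        obtain rfl | rfl := zmod2_eq_zero_or_eq_one b <;>
        simp [ZMod.val_one, CharTwo.add_self_eq_zero]
    rw [add_assoc, ZModModule.add_self, add_zero, add_dotProduct, single_dotProduct,
      neg_one_pow_val_add, Pi.add_apply, hI (c j) (x.1 j)]
    ring
  · simp

lemma CNOTgate_mem_unitaryGroup {j k : Fin n} (hjk : j ≠ k) :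
    CNOTgate j k ∈ unitaryGroup (BV n) ℂ := by
  rw [mem_unitaryGroup_iff']
  ext r c
  rw [mul_apply, Finset.sum_eq_single (r + Pi.single k (r j))]
  · simp [CNOTgate, update_add_eq_add_single, one_apply,
      (add_single_involutive hjk).injective.eq_iff]
  · intro m _ hm
    simp [CNOTgate, update_add_eq_add_single, hm]
  · simp

lemma pauli_mul_CNOTgate {j k : Fin n} (hjk : j ≠ k) (x : BV n × BV n) :
    pauli x * CNOTgate j k
      = CNOTgate j k * pauli (x.1 + Pi.single k (x.1 j), x.2 + Pi.single j (x.2 k)) := by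
  ext r c
  rw [pauli_mul_apply, mul_pauli_apply]
  simp only [CNOTgate, of_apply, update_add_eq_add_single]
  set c' : BV n := c + (x.1 + Pi.single k (x.1 j))
  have hL : c' + Pi.single k (c' j) = c + Pi.single k (c j) + x.1 := by
    funext i
    simp only [c', Pi.add_apply, Pi.single_eq_of_ne hjk, add_zero, Pi.single_add]
    grind
  simp only [hL, add_eq_iff_eq_add_of_zmodModule]
  split_ifs with h
  · rw [h, ← hL, dotProduct_add_single, mul_one, one_mul]
  · simp

def pauliNormalizer (n : ℕ) : Submonoid (Matrix (BV n) (BV n) ℂ) where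
  carrier := {C | ∀ x, ∃ y, ∃ μ : ℂ, ‖μ‖ = 1 ∧ pauli x * C = μ • (C * pauli y)}
  one_mem' x := ⟨x, 1, by simp⟩
  mul_mem' {C D} hC hD x := by
    obtain ⟨y, μ, hμ, hCy⟩ := hC x
    obtain ⟨z, ν, hν, hDz⟩ := hD y
    refine ⟨z, μ * ν, by simp [hμ, hν], ?_⟩
    rw [← mul_assoc, hCy, smul_mul_assoc, mul_assoc, hDz, mul_smul_comm, smul_smul, mul_assoc]

lemma cliffordGroup_le : CliffordGroup n ≤ pauliNormalizer n ⊓ unitaryGroup (BV n) ℂ := by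
  refine Submonoid.closure_le.mpr ?_
  rintro M (⟨j, rfl⟩ | ⟨j, rfl⟩ | ⟨j, k, hjk, rfl⟩)
  · exact ⟨fun x => ⟨_, _, by simp, pauli_mul_Hgate j x⟩, Hgate_mem_unitaryGroup j⟩
  · exact ⟨fun x => ⟨_, _, by simp, pauli_mul_Sgate j x⟩, Sgate_mem_unitaryGroup j⟩
  · exact ⟨fun x => ⟨_, 1, norm_one, by rw [one_smul, pauli_mul_CNOTgate hjk x]⟩,
      CNOTgate_mem_unitaryGroup hjk⟩

lemma pauliOverlap_e0 (y : BV n × BV n) : pauliOverlap e0 e0 y = if y.1 = 0 then 1 else 0 := by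
  rw [pauliOverlap_eq_sum, Finset.sum_eq_single 0]
  · simp [e0]
  · intro b _ hb
    simp [e0, hb]
  · simp

lemma star_mulVec_dotProduct_mulVec {ι α : Type*} [Fintype ι] [DecidableEq ι] [CommRing α]
    [StarRing α] {C : Matrix ι ι α} (hC : C ∈ unitaryGroup ι α) (v w : ι → α) :
    star (C *ᵥ v) ⬝ᵥ (C *ᵥ w) = star v ⬝ᵥ w := by
  rw [star_mulVec, ← dotProduct_mulVec, mulVec_mulVec, ← star_eq_conjTranspose,
    mem_unitaryGroup_iff'.mp hC, one_mulVec]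

lemma innerC_self_of_mem_stabStates {φ : BV n → ℂ} (hφ : φ ∈ stabStates n) : innerC φ φ = 1 := by
  obtain ⟨C, hC, rfl⟩ := hφ
  refine (star_mulVec_dotProduct_mulVec (cliffordGroup_le hC).2 e0 e0).trans ?_
  simp [dotProduct, e0]

lemma pauliOverlap_self_eq_zero_or_norm_eq_one {φ : BV n → ℂ} (hφ : φ ∈ stabStates n)
    (x : BV n × BV n) : pauliOverlap φ φ x = 0 ∨ ‖pauliOverlap φ φ x‖ = 1 := by
  obtain ⟨C, hC, rfl⟩ := hφ
  obtain ⟨hN, hU⟩ := cliffordGroup_le hC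
  obtain ⟨y, μ, hμ, hxy⟩ := hN x
  have : pauliOverlap (C *ᵥ e0) (C *ᵥ e0) x = μ * pauliOverlap e0 e0 y := by
    rw [pauliOverlap, mulVec_mulVec, hxy, smul_mulVec, ← mulVec_mulVec, dotProduct_smul,
      star_mulVec_dotProduct_mulVec hU, smul_eq_mul, pauliOverlap]
  rw [this, pauliOverlap_e0]
  split_ifs <;> simp [hμ]

end Clifford

theorem eta_lower_bound_of_fidelity_general {n : ℕ} (ψ : BV n → ℂ)
    (k : ℝ) (hk : 1 ≤ k) (hfid : 1 / k ≤ stabFidelity ψ) :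
    1 / k ^ 6 ≤ (2 ^ n : ℝ) * ∑ x : BV n × BV n, weylDist ψ x * charDist ψ x := by
  rw [eta_eq]
  set η := ((2 : ℝ) ^ n)⁻¹ * ∑ x, ‖pauliOverlap ψ ψ x‖ ^ 6
  have hη : 0 ≤ η := by positivity
  have hF : stabFidelity ψ ≤ η ^ (6⁻¹ : ℝ) := by
    refine Real.sSup_le ?_ (by positivity)
    rintro _ ⟨φ, hφ, rfl⟩
    rw [Real.le_rpow_inv_iff_of_pos (by positivity) hη (by norm_num), Real.rpow_ofNat]
    exact fidelity_pow_six_le φ ψ (innerC_self_of_mem_stabStates hφ)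
      (pauliOverlap_self_eq_zero_or_norm_eq_one hφ)
  calc 1 / k ^ 6 = (1 / k) ^ 6 := by rw [div_pow, one_pow]
    _ ≤ (η ^ (6⁻¹ : ℝ)) ^ 6 := pow_le_pow_left₀ (by positivity) (hfid.trans hF) 6
    _ = η := by rw [← Real.rpow_natCast, ← Real.rpow_mul hη]; norm_num

/-- if F_𝒮(ψ) ≥ 1/k then η(ψ) = 2ⁿ Σ_x q_ψ(x) p_ψ(x) ≥ 1/k⁶. -/
theorem eta_lower_bound_of_fidelity {n : ℕ} (hn : 1 ≤ n) (ψ : BV n → ℂ)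
    (hψ : IsState ψ) (k : ℝ) (hk : 1 ≤ k) (hfid : 1 / k ≤ stabFidelity ψ) :
    1 / k ^ 6 ≤ (2 ^ n : ℝ) * ∑ x : BV n × BV n, weylDist ψ x * charDist ψ x :=
  eta_lower_bound_of_fidelity_general ψ k hk hfid
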